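/- With V_φ(ξ) = -½(1+2ε²) + (3/2)ε² sech²(ξ) and φ'(ξ) = sech²(ξ), the weighted inner product (φ', V_φ)_ε := ∫_ℝ [φ'(ξ)V_φ(ξ) + ε² φ''(ξ)V_φ'(ξ)] dξ equals -1 + (8/5)ε⁴. -/

import Mathlib

/-!
Since `sech² = 1 - tanh²` and `(sech²)' = -2 tanh sech²`, the integrand is
`sech² ξ · P(tanh ξ)` for a quartic polynomial `P`; the substitution `t = tanh ξ`, whose
Jacobian is exactly `sech²`, turns the integral over `ℝ` into `∫_{-1}^{1} P(t) dt`.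
-/

open MeasureTheory Real

lemma Real.one_div_cosh_sq (x : ℝ) : (1 / cosh x) ^ 2 = 1 - tanh x ^ 2 := by
  have hcosh : cosh x ≠ 0 := (cosh_pos x).ne'
  rw [tanh_eq_sinh_div_cosh]
  field_simp
  linarith [cosh_sq_sub_sinh_sq x]

lemma Real.hasDerivAt_tanh (x : ℝ) : HasDerivAt tanh (1 - tanh x ^ 2) x := by
  have h : HasDerivAt tanh ((cosh x * cosh x - sinh x * sinh x) / cosh x ^ 2) x := by
    rw [show tanh = sinh / cosh from funext tanh_eq_sinh_div_cosh]
    exact (hasDerivAt_sinh x).div (hasDerivAt_cosh x) (cosh_pos x).ne'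
  rwa [← sq, ← sq, cosh_sq_sub_sinh_sq, ← one_pow 2, ← div_pow, one_div_cosh_sq] at h

lemma Real.hasDerivAt_one_div_cosh_sq (x : ℝ) :
    HasDerivAt (fun ξ => (1 / cosh ξ) ^ 2) (-2 * tanh x * (1 - tanh x ^ 2)) x := by
  rw [funext one_div_cosh_sq]
  exact (((hasDerivAt_tanh x).pow 2).const_sub 1).congr_deriv (by ring)

theorem integral_one_sub_tanh_sq_smul_comp_tanh {E : Type*} [NormedAddCommGroup E]
    [NormedSpace ℝ E] (f : ℝ → E) :
    ∫ x, (1 - tanh x ^ 2) • f (tanh x) = ∫ t in (-1)..1, f t := by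
  have h := integral_image_eq_integral_abs_deriv_smul MeasurableSet.univ
    (fun x _ => (hasDerivAt_tanh x).hasDerivWithinAt) tanh_injective.injOn f
  rw [tanh_bijOn.image_eq, Measure.restrict_univ] at h
  simp only [abs_of_pos (sub_pos.2 (tanh_sq_lt_one _))] at h
  rw [← h, intervalIntegral.integral_of_le (by norm_num), integral_Ioc_eq_integral_Ioo]

lemma integral_neg_one_one_even_quartic (a b c : ℝ) :
    ∫ t in (-1)..1, (a + b * (1 - t ^ 2) + c * (t ^ 2 * (1 - t ^ 2))) =
      2 * a + 4 / 3 * b + 4 / 15 * c := by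
  have hF : ∀ t : ℝ, HasDerivAt (fun t => a * t + b * (t - t ^ 3 / 3) + c * (t ^ 3 / 3 - t ^ 5 / 5))
      (a + b * (1 - t ^ 2) + c * (t ^ 2 * (1 - t ^ 2))) t := fun t =>
    ((((hasDerivAt_id t).const_mul a).add
      (((hasDerivAt_id t).sub ((hasDerivAt_pow 3 t).div_const 3)).const_mul b)).add
      ((((hasDerivAt_pow 3 t).div_const 3).sub ((hasDerivAt_pow 5 t).div_const 5)).const_mul c)
      ).congr_deriv (by ring)
  rw [intervalIntegral.integral_eq_sub_of_hasDerivAt (fun t _ => hF t)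
    (Continuous.intervalIntegrable (by fun_prop) _ _)]
  ring

/-- With `V_φ(ξ) = -½(1+2ε²) + (3/2)ε² sech²(ξ)` and `φ'(ξ) = sech²(ξ)`, the weighted
inner product `(φ',V_φ)_ε = ∫ [φ' V_φ + ε² φ'' V_φ'] dξ` equals `-1 + (8/5)ε⁴`. -/
theorem weighted_inner_product_value (ε : ℝ) :
    let φ' : ℝ → ℝ := fun ξ => (1 / Real.cosh ξ) ^ 2
    let Vφ : ℝ → ℝ := fun ξ => -(1/2) * (1 + 2*ε^2) + (3/2) * ε^2 * (1 / Real.cosh ξ) ^ 2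
    (∫ ξ : ℝ, (φ' ξ * Vφ ξ + ε^2 * deriv φ' ξ * deriv Vφ ξ)) = -1 + (8/5) * ε^4 := by
  intro φ' Vφ
  let P : ℝ → ℝ := fun t =>
    -(1 / 2) * (1 + 2 * ε ^ 2) + 3 / 2 * ε ^ 2 * (1 - t ^ 2) + 6 * ε ^ 4 * (t ^ 2 * (1 - t ^ 2))
  have hφ' (x : ℝ) : deriv φ' x = -2 * tanh x * (1 - tanh x ^ 2) :=
    (hasDerivAt_one_div_cosh_sq x).deriv
  have hVφ (x : ℝ) : deriv Vφ x = 3 / 2 * ε ^ 2 * (-2 * tanh x * (1 - tanh x ^ 2)) :=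
    (((hasDerivAt_one_div_cosh_sq x).const_mul _).const_add _).deriv
  have hintegrand (ξ : ℝ) :
      φ' ξ * Vφ ξ + ε ^ 2 * deriv φ' ξ * deriv Vφ ξ = (1 - tanh ξ ^ 2) • P (tanh ξ) := by
    rw [hφ', hVφ]
    simp only [φ', Vφ, P, one_div_cosh_sq, smul_eq_mul]
    ring
  rw [integral_congr_ae (.of_forall hintegrand), integral_one_sub_tanh_sq_smul_comp_tanh,
    integral_neg_one_one_even_quartic]
  ring
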